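/- arXiv:1903.07752 — 2 statements merged into one kernel-verified Lean document; each statement's English description precedes it below -/
import Mathlib

section
/- Assume there exists π̄ ∈ Ξ with f_{φ^0}(π̄) = inf_{π ∈ Ξ} f_{φ^0}(π) and ξ^π̄(s,a) < ∞ for every s ∈ S_r and a ∈ A(s). Then for every ε̄ > 0 there exists ε > 0 such that inf_{π ∈ Ξ} f_{φ^ε}(π) ≤ inf_{π ∈ Ξ} f_{φ^0}(π) + ε̄ (Theorem 1: ε̄-optimality of the perturbed incentive-cost minimization). -/
open scoped ENNReal

section

variable {S A : Type} [Fintype S] [Fintype A] [DecidableEq S] [DecidableEq A]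

/-- A policy: a sequence of decision rules, each supported on the available actions. -/
def IsPolicy (avail : S → Finset A) (π : ℕ → S → A → ℝ) : Prop :=
  ∀ t s, (∀ a, 0 ≤ π t s a) ∧ (∀ a, a ∉ avail s → π t s a = 0) ∧
    (∑ a ∈ avail s, π t s a) = 1

/-- A stationary policy uses the same decision rule at every stage. -/
def IsStationaryPolicy (π : ℕ → S → A → ℝ) : Prop := ∀ t, π t = π 0

/-- Occupancy measures: `occ P avail init π t s a` is `μ^π_{t+1}(s,a)` (stages indexed from 1). -/
def occ (P : S → A → S → ℝ) (avail : S → Finset A) (init : S)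
    (π : ℕ → S → A → ℝ) : ℕ → S → A → ℝ
  | 0 => fun s a => if s = init then π 0 s a else 0
  | t + 1 => fun s' a' =>
      π (t + 1) s' a' * ∑ s : S, ∑ a ∈ avail s, P s a s' * occ P avail init π t s a

/-- Expected residence time `ξ^π(s,a) ∈ [0,∞]`. -/
noncomputable def resTime (P : S → A → S → ℝ) (avail : S → Finset A) (init : S)
    (π : ℕ → S → A → ℝ) (s : S) (a : A) : ℝ≥0∞ :=
  ∑' t : ℕ, ENNReal.ofReal (occ P avail init π t s a)

/-- Probability of reaching the absorbing set `B`. -/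
noncomputable def reachProb (P : S → A → S → ℝ) (avail : S → Finset A) (B : Finset S)
    (init : S) (π : ℕ → S → A → ℝ) : ℝ≥0∞ :=
  ⨆ t : ℕ, ∑ s ∈ B, ∑ a ∈ avail s, ENNReal.ofReal (occ P avail init π t s a)

/-- `x*_s`: optimal probability of reaching `B` starting from `s`. -/
noncomputable def xstar (P : S → A → S → ℝ) (avail : S → Finset A) (B : Finset S)
    (s : S) : ℝ≥0∞ :=
  ⨆ π : {π : ℕ → S → A → ℝ // IsPolicy avail π}, reachProb P avail B s π.1

/-- A state is absorbing if every available action loops on it with probability 1. -/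
def Absorbing (P : S → A → S → ℝ) (avail : S → Finset A) (s : S) : Prop :=
  ∀ a ∈ avail s, P s a s = 1

/-- Expected total cost `f_c(π) ∈ [0,∞]`. -/
noncomputable def totalCost (P : S → A → S → ℝ) (avail : S → Finset A) (init : S)
    (c : S → A → ℝ) (π : ℕ → S → A → ℝ) : ℝ≥0∞ :=
  ∑ s : S, ∑ a ∈ avail s, resTime P avail init π s a * ENNReal.ofReal (c s a)


open scoped Classical in
/-- The perturbed cost `φ^ε`: `c(s,a) + ε` on `S_r`, and `0` on `B ∪ S_0`. -/
noncomputable def phiPert (P : S → A → S → ℝ) (avail : S → Finset A) (B : Finset S)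
    (c : S → A → ℝ) (ε : ℝ) (s : S) (a : A) : ℝ :=
  if s ∈ B ∨ xstar P avail B s = 0 then 0 else c s a + ε

end

section

variable {S A : Type} [Fintype S] [DecidableEq S]

/- `φ^ε ≤ φ^0 + ε · φ'`, where `φ' := phiPert P avail B 0 1` is the indicator of `S_r`; hence
`totalCost … φ' π` is the expected time `π` spends in `S_r`. -/
theorem ofReal_phiPert_le (P : S → A → S → ℝ) (avail : S → Finset A) (B : Finset S)
    (c : S → A → ℝ) (ε : ℝ) (s : S) (a : A) :
    ENNReal.ofReal (phiPert P avail B c ε s a) ≤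
      ENNReal.ofReal (phiPert P avail B c 0 s a) +
        ENNReal.ofReal ε * ENNReal.ofReal (phiPert P avail B 0 1 s a) := by
  unfold phiPert
  split_ifs
  · simp
  · simpa using ENNReal.ofReal_add_le

theorem totalCost_phiPert_le (P : S → A → S → ℝ) (avail : S → Finset A) (B : Finset S)
    (init : S) (c : S → A → ℝ) (ε : ℝ) (π : ℕ → S → A → ℝ) :
    totalCost P avail init (phiPert P avail B c ε) π ≤
      totalCost P avail init (phiPert P avail B c 0) π +
        ENNReal.ofReal ε * totalCost P avail init (phiPert P avail B 0 1) π := by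
  simp only [totalCost, Finset.mul_sum, ← Finset.sum_add_distrib]
  gcongr with s _ a _
  rw [mul_left_comm, ← mul_add]
  gcongr
  exact ofReal_phiPert_le P avail B c ε s a

theorem totalCost_phiPert_zero_one_ne_top (P : S → A → S → ℝ) (avail : S → Finset A)
    (B : Finset S) (init : S) (π : ℕ → S → A → ℝ)
    (hfin : ∀ s, s ∉ B → xstar P avail B s ≠ 0 → ∀ a ∈ avail s,
      resTime P avail init π s a < ⊤) :
    totalCost P avail init (phiPert P avail B 0 1) π ≠ ⊤ := by
  refine ENNReal.sum_ne_top.2 fun s _ => ENNReal.sum_ne_top.2 fun a ha => ?_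
  unfold phiPert
  split_ifs with hs
  · simp
  · push Not at hs
    simpa using (hfin s hs.1 hs.2 a ha).ne

end

section

variable {S A : Type} [Fintype S] [Fintype A] [DecidableEq S] [DecidableEq A]

theorem perturbed_cost_epsilon_optimality_general
    (P : S → A → S → ℝ) (avail : S → Finset A) (s0 : S) (B : Finset S)
    (c : S → A → ℝ)
    (hbar : ∃ π : ℕ → S → A → ℝ, IsPolicy avail π ∧
      reachProb P avail B s0 π = xstar P avail B s0 ∧
      totalCost P avail s0 (phiPert P avail B c 0) π =
        (⨅ π' : {π' : ℕ → S → A → ℝ //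
            IsPolicy avail π' ∧ reachProb P avail B s0 π' = xstar P avail B s0},
          totalCost P avail s0 (phiPert P avail B c 0) π'.1) ∧
      ∀ s, s ∉ B → xstar P avail B s ≠ 0 → ∀ a ∈ avail s,
        resTime P avail s0 π s a < ⊤) :
    ∀ εbar : ℝ, 0 < εbar → ∃ ε : ℝ, 0 < ε ∧
      (⨅ π' : {π' : ℕ → S → A → ℝ //
          IsPolicy avail π' ∧ reachProb P avail B s0 π' = xstar P avail B s0},
        totalCost P avail s0 (phiPert P avail B c ε) π'.1) ≤
      (⨅ π' : {π' : ℕ → S → A → ℝ //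
          IsPolicy avail π' ∧ reachProb P avail B s0 π' = xstar P avail B s0},
        totalCost P avail s0 (phiPert P avail B c 0) π'.1) + ENNReal.ofReal εbar := by
  intro εbar hεbar
  obtain ⟨π, hpol, hreach, hopt, hfin⟩ := hbar
  obtain ⟨ε, hεpos, hε⟩ := ENNReal.exists_nnreal_pos_mul_lt
    (totalCost_phiPert_zero_one_ne_top P avail B s0 π hfin) (ENNReal.ofReal_pos.2 hεbar).ne'
  refine ⟨ε, hεpos,
    (iInf_le_of_le ⟨π, hpol, hreach⟩ (totalCost_phiPert_le P avail B s0 c ε π)).trans ?_⟩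
  rw [hopt, ENNReal.ofReal_coe_nnreal]
  gcongr

/-- **Theorem 1** (ε̄-optimality of the perturbed incentive-cost minimization). -/
theorem perturbed_cost_epsilon_optimality
    (P : S → A → S → ℝ) (avail : S → Finset A) (s0 : S) (B : Finset S)
    (havail : ∀ s, (avail s).Nonempty)
    (hP0 : ∀ s a s', 0 ≤ P s a s')
    (hP1 : ∀ s, ∀ a ∈ avail s, (∑ s' : S, P s a s') = 1)
    (habs : ∀ s : S, (s ∈ B ∨ xstar P avail B s = 0) → Absorbing P avail s)
    (hs0B : s0 ∉ B) (hs0r : xstar P avail B s0 ≠ 0)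
    (c : S → A → ℝ)
    (hc0 : ∀ s a, 0 ≤ c s a)
    (hcz : ∀ s a, (s ∈ B ∨ xstar P avail B s = 0) → c s a = 0)
    (hbar : ∃ π : ℕ → S → A → ℝ, IsPolicy avail π ∧
      reachProb P avail B s0 π = xstar P avail B s0 ∧
      totalCost P avail s0 (phiPert P avail B c 0) π =
        (⨅ π' : {π' : ℕ → S → A → ℝ //
            IsPolicy avail π' ∧ reachProb P avail B s0 π' = xstar P avail B s0},
          totalCost P avail s0 (phiPert P avail B c 0) π'.1) ∧
      ∀ s, s ∉ B → xstar P avail B s ≠ 0 → ∀ a ∈ avail s,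
        resTime P avail s0 π s a < ⊤) :
    ∀ εbar : ℝ, 0 < εbar → ∃ ε : ℝ, 0 < ε ∧
      (⨅ π' : {π' : ℕ → S → A → ℝ //
          IsPolicy avail π' ∧ reachProb P avail B s0 π' = xstar P avail B s0},
        totalCost P avail s0 (phiPert P avail B c ε) π'.1) ≤
      (⨅ π' : {π' : ℕ → S → A → ℝ //
          IsPolicy avail π' ∧ reachProb P avail B s0 π' = xstar P avail B s0},
        totalCost P avail s0 (phiPert P avail B c 0) π'.1) + ENNReal.ofReal εbar :=
  perturbed_cost_epsilon_optimality_general P avail s0 B c hbar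

end
end

section
/- For every policy π and every s ∈ S_r, the balance equation Σ_{a∈A(s)} ξ^π(s,a) = [s = s0] + Σ_{s'∈S_r} Σ_{a∈A(s')} P(s',a,s) · ξ^π(s',a) holds as an identity in [0,∞], where [s = s0] equals 1 if s = s0 and 0 otherwise. (This is the flow-conservation constraint satisfied by the expected residence times in the paper's linear program.) -/
open scoped ENNReal

/-! Summing the recursion for `μ_{t+1}` over the actions available at `s` removes the decision
rule, which is a probability distribution on `A(s)`; summing over all stages then gives the balance
equation with inflow from every state. An absorbing state `c ∈ C` moves to any `s ≠ c` with
probability zero, so the inflow from `C` vanishes. -/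

section

variable {S A : Type} [Fintype S] [DecidableEq S]
  {P : S → A → S → ℝ} {avail : S → Finset A} {init : S} {π : ℕ → S → A → ℝ}

theorem occ_nonneg (hP0 : ∀ s a s', 0 ≤ P s a s') (hπ : IsPolicy avail π) :
    ∀ t s a, 0 ≤ occ P avail init π t s a
  | 0, s, a => by
    simp only [occ]
    split_ifs
    exacts [(hπ 0 s).1 a, le_rfl]
  | t + 1, s, a =>
    mul_nonneg ((hπ (t + 1) s).1 a) <| Finset.sum_nonneg fun s' _ =>
      Finset.sum_nonneg fun a' _ => mul_nonneg (hP0 s' a' s) (occ_nonneg hP0 hπ t s' a')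

theorem sum_occ_zero (hπ : IsPolicy avail π) (s : S) :
    ∑ a ∈ avail s, occ P avail init π 0 s a = if s = init then 1 else 0 := by
  by_cases h : s = init
  · simp only [occ, h, if_true, (hπ 0 init).2.2]
  · simp [occ, h]

theorem sum_occ_succ (hπ : IsPolicy avail π) (t : ℕ) (s : S) :
    ∑ a ∈ avail s, occ P avail init π (t + 1) s a =
      ∑ s' : S, ∑ a ∈ avail s', P s' a s * occ P avail init π t s' a := by
  simp only [occ, ← Finset.sum_mul, (hπ (t + 1) s).2.2, one_mul]

theorem ofReal_sum_occ_succ (hP0 : ∀ s a s', 0 ≤ P s a s') (hπ : IsPolicy avail π)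
    (t : ℕ) (s : S) :
    ENNReal.ofReal (∑ a ∈ avail s, occ P avail init π (t + 1) s a) =
      ∑ s' : S, ∑ a ∈ avail s',
        ENNReal.ofReal (P s' a s) * ENNReal.ofReal (occ P avail init π t s' a) := by
  have hterm : ∀ s' a, 0 ≤ P s' a s * occ P avail init π t s' a := fun s' a =>
    mul_nonneg (hP0 s' a s) (occ_nonneg hP0 hπ t s' a)
  rw [sum_occ_succ hπ, ENNReal.ofReal_sum_of_nonneg fun s' _ =>
    Finset.sum_nonneg fun a _ => hterm s' a]
  refine Finset.sum_congr rfl fun s' _ => ?_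
  rw [ENNReal.ofReal_sum_of_nonneg fun a _ => hterm s' a]
  exact Finset.sum_congr rfl fun a _ => ENNReal.ofReal_mul (hP0 s' a s)

theorem sum_resTime_eq_inflow (hP0 : ∀ s a s', 0 ≤ P s a s') (hπ : IsPolicy avail π)
    (s : S) :
    ∑ a ∈ avail s, resTime P avail init π s a =
      (if s = init then 1 else 0) + ∑ s' : S, ∑ a ∈ avail s',
        ENNReal.ofReal (P s' a s) * resTime P avail init π s' a := by
  have hstage : ∀ t, ∑ a ∈ avail s, ENNReal.ofReal (occ P avail init π t s a) =
      ENNReal.ofReal (∑ a ∈ avail s, occ P avail init π t s a) := fun t =>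
    (ENNReal.ofReal_sum_of_nonneg fun a _ => occ_nonneg hP0 hπ t s a).symm
  calc ∑ a ∈ avail s, resTime P avail init π s a
      = ∑' t, ENNReal.ofReal (∑ a ∈ avail s, occ P avail init π t s a) := by
        simp only [resTime, ← hstage]
        exact (Summable.tsum_finsetSum fun _ _ => ENNReal.summable).symm
    _ = ENNReal.ofReal (∑ a ∈ avail s, occ P avail init π 0 s a) +
          ∑' t, ENNReal.ofReal (∑ a ∈ avail s, occ P avail init π (t + 1) s a) :=
        tsum_eq_zero_add' ENNReal.summable
    _ = _ := by
        simp only [sum_occ_zero hπ, ofReal_sum_occ_succ hP0 hπ, resTime, ENNReal.tsum_mul_left,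
          Summable.tsum_finsetSum fun _ _ => ENNReal.summable]
        split_ifs <;> simp

theorem Absorbing.transition_eq_zero {s' : S} (habs : Absorbing P avail s') {a : A}
    (ha : a ∈ avail s') (hP0 : ∀ x, 0 ≤ P s' a x) (hP1 : ∑ x : S, P s' a x = 1) {s : S}
    (hs : s ≠ s') : P s' a s = 0 := by
  have hrest : ∑ x ∈ Finset.univ.erase s', P s' a x = 0 := by
    have := Finset.add_sum_erase Finset.univ (P s' a) (Finset.mem_univ s')
    rw [hP1, habs a ha] at this
    linarith
  exact (Finset.sum_eq_zero_iff_of_nonneg fun x _ => hP0 x).mp hrest s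
    (Finset.mem_erase.mpr ⟨hs, Finset.mem_univ s⟩)

end

section

variable {S A : Type} [Fintype S] [Fintype A] [DecidableEq S] [DecidableEq A]

theorem residence_time_balance_equation_general
    (P : S → A → S → ℝ) (avail : S → Finset A) (s0 : S) (C : Finset S)
    (hP0 : ∀ s a s', 0 ≤ P s a s')
    (hP1 : ∀ s, ∀ a ∈ avail s, (∑ s' : S, P s a s') = 1)
    (habs : ∀ s ∈ C, Absorbing P avail s)
    (π : ℕ → S → A → ℝ) (hπ : IsPolicy avail π) :
    ∀ s : S, s ∉ C →
      (∑ a ∈ avail s, resTime P avail s0 π s a) =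
        (if s = s0 then 1 else 0) +
          ∑ s' ∈ Finset.univ \ C, ∑ a ∈ avail s',
            ENNReal.ofReal (P s' a s) * resTime P avail s0 π s' a := by
  intro s hs
  rw [sum_resTime_eq_inflow hP0 hπ s]
  congr 1
  refine (Finset.sum_subset (Finset.subset_univ _) fun s' _ hs' => ?_).symm
  have hC : s' ∈ C := by simpa using hs'
  refine Finset.sum_eq_zero fun a ha => ?_
  have hne : s ≠ s' := (ne_of_mem_of_not_mem hC hs).symm
  rw [(habs s' hC).transition_eq_zero ha (hP0 s' a) (hP1 s' a ha) hne, ENNReal.ofReal_zero,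
    zero_mul]

/-- **Flow conservation.** For every policy `π` and every non-absorbing state `s ∈ S_r = S \ C`,
`Σ_{a∈A(s)} ξ^π(s,a) = [s = s0] + Σ_{s'∈S_r} Σ_{a∈A(s')} P(s',a,s)·ξ^π(s',a)`,
as an identity in `[0,∞]`. -/
theorem residence_time_balance_equation
    (P : S → A → S → ℝ) (avail : S → Finset A) (s0 : S) (C : Finset S)
    (havail : ∀ s, (avail s).Nonempty)
    (hP0 : ∀ s a s', 0 ≤ P s a s')
    (hP1 : ∀ s, ∀ a ∈ avail s, (∑ s' : S, P s a s') = 1)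
    (habs : ∀ s ∈ C, Absorbing P avail s)
    (hs0 : s0 ∉ C)
    (π : ℕ → S → A → ℝ) (hπ : IsPolicy avail π) :
    ∀ s : S, s ∉ C →
      (∑ a ∈ avail s, resTime P avail s0 π s a) =
        (if s = s0 then 1 else 0) +
          ∑ s' ∈ Finset.univ \ C, ∑ a ∈ avail s',
            ENNReal.ofReal (P s' a s) * resTime P avail s0 π s' a :=
  residence_time_balance_equation_general P avail s0 C hP0 hP1 habs π hπ

end
end
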